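/- Let n ≥ 1 and c ∈ ℝ. Let (Ω, ℱ, P) be a probability space and ξ : Ω × ℝ² → ℝ a jointly measurable random field such that ξ(ω, ·) is continuous for every ω and |ξ(ω, z)| ≤ M for some constant M and all (ω, z). Assume ξ is n-point stationary: for all h, z₁,…,zₙ ∈ ℝ², E[∏_{i=1}^n ξ(z_i + h)] = E[∏_{i=1}^n ξ(z_i)]. Let K₁,…,Kₙ : ℝ² → ℝ be twice continuously differentiable with compact support, and for a kernel K write (K ∗ ξ)(w) = ∫_{ℝ²} K(w − z) ξ(z) dz. Then for every w ∈ ℝ²: E[ Σ_{i=1}^n ((L_c K_i) ∗ ξ)(w) ∏_{k≠i} (K_k ∗ ξ)(w) ] = c · E[ Σ_{i≠j} ((∂_x K_i) ∗ ξ)(w) ((∂_x K_j) ∗ ξ)(w) ∏_{k∉{i,j}} (K_k ∗ ξ)(w) ], where the second sum runs over all ordered pairs (i,j) with i ≠ j. -/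

import Mathlib

open MeasureTheory Finset

/-- Partial derivative in the first ("time") coordinate of `ℝ × ℝ`. -/
noncomputable def pt (f : ℝ × ℝ → ℝ) (w : ℝ × ℝ) : ℝ := fderiv ℝ f w (1, 0)

/-- Partial derivative in the second ("space") coordinate of `ℝ × ℝ`. -/
noncomputable def px (f : ℝ × ℝ → ℝ) (w : ℝ × ℝ) : ℝ := fderiv ℝ f w (0, 1)

/-- The parabolic operator `L_c f = ∂_t f − c ∂_x² f`. -/
noncomputable def Lop (c : ℝ) (f : ℝ × ℝ → ℝ) : ℝ × ℝ → ℝ :=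
  fun w => pt f w - c * px (px f) w

/-- Convolution `(K ∗ f)(w) = ∫ K(w − z) f(z) dz` on `ℝ × ℝ`. -/
noncomputable def conv (K f : ℝ × ℝ → ℝ) (w : ℝ × ℝ) : ℝ :=
  ∫ z : ℝ × ℝ, K (w - z) * f z

/-!
Stationarity makes the correlation function `ρ(z) = E[∏ ξ(zᵢ)]` of `ξ` invariant under the
diagonal shifts `z ↦ (zᵢ + h)ᵢ`. By Fubini, `E[∏ (Gᵢ ∗ ξ)(w)] = ∫ ρ(z) ∏ Gᵢ(w − zᵢ) dz` is the
convolution of `ρ` with the tensor product `⊗ Gᵢ`, evaluated on the diagonal; this convolution is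
constant along the diagonal, so differentiating it in a direction `v` gives
`∑ⱼ E[(∂ᵥGⱼ ∗ ξ)(w) ∏_{k ≠ j} (G_k ∗ ξ)(w)] = 0`. For `v = ∂_t` and `G = K` this kills the
`∂_t` part of `L_c`; for `v = ∂_x` and `G` equal to `K` with `Kᵢ` replaced by `∂_x Kᵢ`, it turns
the `∂_x² Kᵢ` term into minus the sum of the mixed terms over `j ≠ i`.
-/

open scoped Convolution

theorem integral_mul_fderiv_apply_eq_zero_of_invariant
    {E : Type*} [NormedAddCommGroup E] [NormedSpace ℝ E] [MeasurableSpace E] [BorelSpace E]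
    {μ : Measure E} [SFinite μ] [μ.IsAddLeftInvariant]
    {ρ : E → ℝ} (hρ : LocallyIntegrable ρ μ) {u : E} (hρu : ∀ t (s : ℝ), ρ (t + s • u) = ρ t)
    {F : E → ℝ} (hF : ContDiff ℝ 1 F) (hFs : HasCompactSupport F) (x : E) :
    ∫ t, ρ t * fderiv ℝ F (x - t) u ∂μ = 0 := by
  set L : ℝ →L[ℝ] ℝ →L[ℝ] ℝ := ContinuousLinearMap.lsmul ℝ ℝ
  have hφ : ∀ s : ℝ, (ρ ⋆[L, μ] F) (x + s • u) = (ρ ⋆[L, μ] F) x := fun s => by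
    simp only [convolution_def]
    rw [← integral_add_right_eq_self _ (s • u)]
    simp [hρu]
  have hline : HasDerivAt (fun s : ℝ => x + s • u) u 0 := by
    simpa using ((hasDerivAt_id (0 : ℝ)).smul_const u).const_add x
  have hderiv := (hFs.hasFDerivAt_convolution_right L hρ hF x).comp_hasDerivAt_of_eq 0 hline
    (by simp)
  have hconst : HasDerivAt (fun s : ℝ => (ρ ⋆[L, μ] F) (x + s • u)) 0 0 := by
    simp only [hφ]; exact hasDerivAt_const _ _
  have h := hderiv.unique hconst
  rw [convolution_precompR_apply L hρ (hFs.fderiv ℝ) (hF.continuous_fderiv one_ne_zero)] at h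
  simpa [convolution_def, L] using h

theorem Function.forall_update_of_forall {α β : Type*} [DecidableEq α] {p : β → Prop}
    {f : α → β} (hf : ∀ a, p (f a)) {a : α} {b : β} (hb : p b) (a' : α) :
    p (Function.update f a b a') := by
  rcases eq_or_ne a' a with rfl | h
  · rwa [Function.update_self]
  · rw [Function.update_of_ne h]; exact hf a'

theorem Finset.prod_apply_update {ι α M : Type*} [DecidableEq ι] [CommMonoid M]
    {s : Finset ι} {i : ι} (hi : i ∈ s) (g : ι → α → M) (f : ι → α) (a : α) :
    ∏ k ∈ s, g k (Function.update f i a k) = g i a * ∏ k ∈ s.erase i, g k (f k) := by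
  simp_rw [Function.apply_update (fun k => g k) f i a, Finset.prod_update_of_mem hi,
    sdiff_singleton_eq_erase]

section ProdApply

theorem hasCompactSupport_prod_apply {ι V : Type*} [Fintype ι] [TopologicalSpace V] [T2Space V]
    {H : ι → V → ℝ} (hH : ∀ i, HasCompactSupport (H i)) :
    HasCompactSupport fun y : ι → V => ∏ i, H i (y i) := by
  refine HasCompactSupport.intro (isCompact_univ_pi hH) fun y hy => ?_
  obtain ⟨i, hi⟩ : ∃ i, y i ∉ tsupport (H i) := by simpa [Set.mem_univ_pi] using hy
  exact Finset.prod_eq_zero (mem_univ i) (image_eq_zero_of_notMem_tsupport hi)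

variable {ι V : Type*} [Fintype ι] [NormedAddCommGroup V] [NormedSpace ℝ V] {H : ι → V → ℝ}

theorem contDiff_prod_apply {n : WithTop ℕ∞} (hH : ∀ i, ContDiff ℝ n (H i)) :
    ContDiff ℝ n fun y : ι → V => ∏ i, H i (y i) :=
  contDiff_prod fun i _ => (hH i).comp (contDiff_apply ℝ V i)

theorem fderiv_prod_apply_apply [DecidableEq ι] (hH : ∀ i, Differentiable ℝ (H i))
    (y u : ι → V) :
    fderiv ℝ (fun y : ι → V => ∏ i, H i (y i)) y u
      = ∑ j, (∏ k ∈ univ.erase j, H k (y k)) * fderiv ℝ (H j) (y j) (u j) := by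
  have hj : ∀ j ∈ (univ : Finset ι), HasFDerivAt (fun y : ι → V => H j (y j))
      ((fderiv ℝ (H j) (y j)).comp (ContinuousLinearMap.proj j)) y := fun j _ =>
    (hH j (y j)).hasFDerivAt.comp y (hasFDerivAt_apply j y)
  simp [(HasFDerivAt.finsetProd hj).fderiv]

end ProdApply

section Kernel

variable {f : ℝ × ℝ → ℝ}

theorem continuous_pt (hf : ContDiff ℝ 1 f) : Continuous (pt f) :=
  (hf.continuous_fderiv one_ne_zero).clm_apply continuous_const

theorem continuous_px (hf : ContDiff ℝ 1 f) : Continuous (px f) :=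
  (hf.continuous_fderiv one_ne_zero).clm_apply continuous_const

theorem contDiff_px {n : ℕ} (hf : ContDiff ℝ (n + 1) f) : ContDiff ℝ n (px f) :=
  (hf.fderiv_right le_rfl).clm_apply contDiff_const

theorem HasCompactSupport.pt (hf : HasCompactSupport f) : HasCompactSupport (pt f) :=
  hf.fderiv_apply ℝ _

theorem HasCompactSupport.px (hf : HasCompactSupport f) : HasCompactSupport (px f) :=
  hf.fderiv_apply ℝ _

theorem continuous_Lop (hf : ContDiff ℝ 2 f) (c : ℝ) : Continuous (Lop c f) :=
  (continuous_pt (hf.of_le one_le_two)).sub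
    (continuous_const.mul (continuous_px (contDiff_px (n := 1) hf)))

theorem HasCompactSupport.Lop (hf : HasCompactSupport f) (c : ℝ) :
    HasCompactSupport (Lop c f) :=
  hf.pt.sub hf.px.px.mul_left

end Kernel

section RandomField

variable {ι Ω : Type*} [Fintype ι] [MeasurableSpace Ω] {P : Measure Ω} {ξ : Ω → ℝ × ℝ → ℝ}
  {M : ℝ}

noncomputable def correlation (P : Measure Ω) (ξ : Ω → ℝ × ℝ → ℝ) (z : ι → ℝ × ℝ) : ℝ :=
  ∫ ω, ∏ i, ξ ω (z i) ∂P

noncomputable def convMoment (P : Measure Ω) (ξ : Ω → ℝ × ℝ → ℝ) (G : ι → ℝ × ℝ → ℝ)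
    (w : ℝ × ℝ) : ℝ :=
  ∫ ω, ∏ i, conv (G i) (ξ ω) w ∂P

theorem measurable_conv_apply (hmeas : Measurable (Function.uncurry ξ)) {G : ℝ × ℝ → ℝ}
    (hG : Measurable G) (w : ℝ × ℝ) : Measurable fun ω => conv G (ξ ω) w :=
  ((hG.comp (measurable_const.sub measurable_snd)).mul
    hmeas).stronglyMeasurable.integral_prod_right'.measurable

theorem abs_conv_le {G ψ : ℝ × ℝ → ℝ} (hG : Integrable G) (hψ : ∀ z, |ψ z| ≤ M) (w : ℝ × ℝ) :
    |conv G ψ w| ≤ (∫ z, |G z|) * M := calc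
  |conv G ψ w| ≤ ∫ z, |G (w - z) * ψ z| := abs_integral_le_integral_abs
  _ ≤ ∫ z, |G (w - z)| * M := by
    refine integral_mono_of_nonneg (.of_forall fun z => abs_nonneg _)
      ((hG.comp_sub_left w).abs.mul_const M) (.of_forall fun z => ?_)
    dsimp only
    rw [abs_mul]
    exact mul_le_mul_of_nonneg_left (hψ z) (abs_nonneg _)
  _ = (∫ z, |G z|) * M := by rw [integral_mul_const, integral_sub_left_eq_self (|G ·|)]

theorem conv_sub_const_mul {f g ψ : ℝ × ℝ → ℝ} (hf : Integrable f) (hg : Integrable g)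
    (hψ : AEStronglyMeasurable ψ) (hψM : ∀ z, |ψ z| ≤ M) (c : ℝ) (w : ℝ × ℝ) :
    conv (fun x => f x - c * g x) ψ w = conv f ψ w - c * conv g ψ w := by
  have hbd : ∀ᵐ z, ‖ψ z‖ ≤ M := .of_forall hψM
  simp only [conv, sub_mul, mul_assoc]
  rw [integral_sub ((hf.comp_sub_left w).mul_bdd hψ hbd)
    (((hg.comp_sub_left w).mul_bdd hψ hbd).const_mul c), integral_const_mul]

theorem integrable_prod_conv [IsFiniteMeasure P] (hmeas : Measurable (Function.uncurry ξ))
    (hbd : ∀ ω z, |ξ ω z| ≤ M) {G : ι → ℝ × ℝ → ℝ} (hG : ∀ i, Continuous (G i))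
    (hGs : ∀ i, HasCompactSupport (G i)) (w : ℝ × ℝ) :
    Integrable (fun ω => ∏ i, conv (G i) (ξ ω) w) P := by
  refine .of_bound (Finset.measurable_prod _ fun i _ =>
    measurable_conv_apply hmeas (hG i).measurable w).aestronglyMeasurable
    (∏ i, (∫ z, |G i z|) * M) (.of_forall fun ω => ?_)
  rw [Real.norm_eq_abs, Finset.abs_prod]
  exact Finset.prod_le_prod (fun i _ => abs_nonneg _) fun i _ =>
    abs_conv_le ((hG i).integrable_of_hasCompactSupport (hGs i)) (hbd ω) w

theorem convMoment_eq_integral_correlation_mul [IsFiniteMeasure P]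
    (hmeas : Measurable (Function.uncurry ξ)) (hbd : ∀ ω z, |ξ ω z| ≤ M)
    {G : ι → ℝ × ℝ → ℝ} (hG : ∀ i, Continuous (G i)) (hGs : ∀ i, HasCompactSupport (G i))
    (w : ℝ × ℝ) :
    convMoment P ξ G w = ∫ z, correlation P ξ z * ∏ i, G i (w - z i) := by
  have hprod : ∀ ω, ∏ i, conv (G i) (ξ ω) w = ∫ z : ι → ℝ × ℝ, ∏ i, G i (w - z i) * ξ ω (z i) :=
    fun ω => (integral_fintype_prod_volume_eq_prod (fun i y => G i (w - y) * ξ ω y)).symm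
  have hint : Integrable (Function.uncurry fun ω (z : ι → ℝ × ℝ) =>
      ∏ i, G i (w - z i) * ξ ω (z i)) (P.prod volume) := by
    refine ((integrable_const (1 : ℝ)).mul_prod (Integrable.fintype_prod fun i =>
      (((hG i).integrable_of_hasCompactSupport (hGs i)).comp_sub_left w).abs.mul_const M)).mono'
      ?_ (.of_forall fun p => ?_)
    · refine (Finset.measurable_prod _ fun i _ => ?_).aestronglyMeasurable
      exact ((hG i).measurable.comp (measurable_const.sub
        ((measurable_pi_apply i).comp measurable_snd))).mul
        (hmeas.comp (measurable_fst.prodMk ((measurable_pi_apply i).comp measurable_snd)))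
    · simp only [Function.uncurry, Real.norm_eq_abs, Finset.abs_prod, abs_mul, one_mul]
      exact Finset.prod_le_prod (fun i _ => by positivity) fun i _ =>
        mul_le_mul_of_nonneg_left (hbd _ _) (abs_nonneg _)
  simp only [convMoment, hprod]
  rw [integral_integral_swap hint]
  congr 1 with z
  rw [correlation, ← integral_mul_const]
  simp only [Finset.prod_mul_distrib, mul_comm]

theorem locallyIntegrable_correlation [IsFiniteMeasure P]
    (hmeas : Measurable (Function.uncurry ξ))
    (hbd : ∀ ω z, |ξ ω z| ≤ M) : LocallyIntegrable (correlation (ι := ι) P ξ) := by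
  have hm : StronglyMeasurable fun p : (ι → ℝ × ℝ) × Ω => ∏ i, ξ p.2 (p.1 i) :=
    (Finset.measurable_prod _ fun i _ => hmeas.comp
      (measurable_snd.prodMk ((measurable_pi_apply i).comp measurable_fst))).stronglyMeasurable
  refine (memLp_top_of_bound hm.integral_prod_right'.aestronglyMeasurable
    (M ^ Fintype.card ι * P.real Set.univ) (.of_forall fun z =>
      norm_integral_le_of_norm_le_const (.of_forall fun ω => ?_))).locallyIntegrable le_top
  rw [Real.norm_eq_abs, Finset.abs_prod, ← Finset.card_univ, ← Finset.prod_const]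
  exact Finset.prod_le_prod (fun i _ => abs_nonneg _) fun i _ => hbd ω (z i)

variable [IsFiniteMeasure P]

theorem integrable_correlation_mul_prod (hmeas : Measurable (Function.uncurry ξ))
    (hbd : ∀ ω z, |ξ ω z| ≤ M) {G : ι → ℝ × ℝ → ℝ} (hG : ∀ i, Continuous (G i))
    (hGs : ∀ i, HasCompactSupport (G i)) (w : ℝ × ℝ) :
    Integrable fun z => correlation P ξ z * ∏ i, G i (w - z i) :=
  (locallyIntegrable_correlation hmeas hbd).integrable_smul_right_of_hasCompactSupport
    (continuous_finsetProd _ fun i _ => (hG i).comp (continuous_const.sub (continuous_apply i)))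
    (hasCompactSupport_prod_apply (H := fun i y => G i (w - y))
      fun i => (hGs i).comp_homeomorph (Homeomorph.subLeft w))

variable [DecidableEq ι]

theorem sum_convMoment_update_fderiv_eq_zero (hmeas : Measurable (Function.uncurry ξ))
    (hbd : ∀ ω z, |ξ ω z| ≤ M)
    (hstat : ∀ (h : ℝ × ℝ) (z : ι → ℝ × ℝ),
      (∫ ω, ∏ i, ξ ω (z i + h) ∂P) = ∫ ω, ∏ i, ξ ω (z i) ∂P)
    {H : ι → ℝ × ℝ → ℝ} (hH : ∀ i, ContDiff ℝ 1 (H i)) (hHs : ∀ i, HasCompactSupport (H i))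
    (v w : ℝ × ℝ) :
    ∑ j, convMoment P ξ (Function.update H j fun x => fderiv ℝ (H j) x v) w = 0 := by
  set D : ι → ℝ × ℝ → ℝ := fun j x => fderiv ℝ (H j) x v
  have hDc : ∀ j, Continuous (D j) := fun j =>
    ((hH j).continuous_fderiv one_ne_zero).clm_apply continuous_const
  have hDs : ∀ j, HasCompactSupport (D j) := fun j => (hHs j).fderiv_apply ℝ v
  have hF : ∀ j k, Continuous (Function.update H j (D j) k) ∧
      HasCompactSupport (Function.update H j (D j) k) := fun j =>
    Function.forall_update_of_forall (p := fun g => Continuous g ∧ HasCompactSupport g)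
      (fun k => ⟨(hH k).continuous, hHs k⟩) ⟨hDc j, hDs j⟩
  have hρu : ∀ (z : ι → ℝ × ℝ) (s : ℝ),
      correlation P ξ (z + s • fun _ => v) = correlation P ξ z := fun z s =>
    hstat (s • v) z
  calc ∑ j, convMoment P ξ (Function.update H j (D j)) w
      = ∑ j, ∫ z, correlation P ξ z * ∏ k, Function.update H j (D j) k (w - z k) := by
        exact Finset.sum_congr rfl fun j _ => convMoment_eq_integral_correlation_mul hmeas hbd
          (fun k => (hF j k).1) (fun k => (hF j k).2) w
    _ = ∫ z, correlation P ξ z *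
          fderiv ℝ (fun y : ι → ℝ × ℝ => ∏ i, H i (y i)) ((fun _ => w) - z) fun _ => v := by
        rw [← integral_finsetSum _ fun j _ => integrable_correlation_mul_prod hmeas hbd
          (fun k => (hF j k).1) (fun k => (hF j k).2) w]
        congr 1 with z
        rw [fderiv_prod_apply_apply fun i => (hH i).differentiable one_ne_zero, Finset.mul_sum]
        refine Finset.sum_congr rfl fun j _ => ?_
        rw [Finset.prod_apply_update (mem_univ j) (fun k (f : ℝ × ℝ → ℝ) => f (w - z k)) H (D j)]
        simp only [D, Pi.sub_apply]
        ring
    _ = 0 := integral_mul_fderiv_apply_eq_zero_of_invariant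
        (locallyIntegrable_correlation hmeas hbd) hρu
        (contDiff_prod_apply hH) (hasCompactSupport_prod_apply hHs) _

theorem convMoment_update_sub_const_mul (hmeas : Measurable (Function.uncurry ξ))
    (hbd : ∀ ω z, |ξ ω z| ≤ M) {G : ι → ℝ × ℝ → ℝ} (hG : ∀ i, Continuous (G i))
    (hGs : ∀ i, HasCompactSupport (G i)) {f g : ℝ × ℝ → ℝ} (hf : Continuous f)
    (hfs : HasCompactSupport f) (hg : Continuous g) (hgs : HasCompactSupport g) (i : ι) (c : ℝ)
    (w : ℝ × ℝ) :
    convMoment P ξ (Function.update G i fun x => f x - c * g x) w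
      = convMoment P ξ (Function.update G i f) w
        - c * convMoment P ξ (Function.update G i g) w := by
  have hint : ∀ h : ℝ × ℝ → ℝ, Continuous h → HasCompactSupport h →
      Integrable (fun ω => ∏ k, conv (Function.update G i h k) (ξ ω) w) P := fun h hh hhs =>
    integrable_prod_conv hmeas hbd (Function.forall_update_of_forall hG hh)
      (Function.forall_update_of_forall hGs hhs) w
  simp only [convMoment]
  rw [← integral_const_mul, ← integral_sub (hint f hf hfs) ((hint g hg hgs).const_mul c)]
  congr 1 with ω
  simp only [Finset.prod_apply_update (mem_univ i) (fun k (G : ℝ × ℝ → ℝ) => conv G (ξ ω) w)]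
  rw [conv_sub_const_mul (hf.integrable_of_hasCompactSupport hfs)
    (hg.integrable_of_hasCompactSupport hgs)
    (show Measurable (ξ ω) from hmeas.comp measurable_prodMk_left).aestronglyMeasurable (hbd ω)]
  ring

theorem integral_sum_conv_mul_prod_erase (hmeas : Measurable (Function.uncurry ξ))
    (hbd : ∀ ω z, |ξ ω z| ≤ M) {G f : ι → ℝ × ℝ → ℝ} (hG : ∀ i, Continuous (G i))
    (hGs : ∀ i, HasCompactSupport (G i)) (hf : ∀ i, Continuous (f i))
    (hfs : ∀ i, HasCompactSupport (f i)) (w : ℝ × ℝ) :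
    ∫ ω, ∑ i, conv (f i) (ξ ω) w * ∏ k ∈ univ.erase i, conv (G k) (ξ ω) w ∂P
      = ∑ i, convMoment P ξ (Function.update G i (f i)) w := by
  simp only [convMoment]
  rw [← integral_finsetSum _ fun i _ => integrable_prod_conv hmeas hbd
    (Function.forall_update_of_forall hG (hf i)) (Function.forall_update_of_forall hGs (hfs i)) w]
  congr 1 with ω
  exact Finset.sum_congr rfl fun i _ =>
    (Finset.prod_apply_update (mem_univ i) (fun k G => conv G (ξ ω) w) G (f i)).symm

theorem integral_sum_sum_conv_mul_conv_mul_prod_erase (hmeas : Measurable (Function.uncurry ξ))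
    (hbd : ∀ ω z, |ξ ω z| ≤ M) {G f : ι → ℝ × ℝ → ℝ} (hG : ∀ i, Continuous (G i))
    (hGs : ∀ i, HasCompactSupport (G i)) (hf : ∀ i, Continuous (f i))
    (hfs : ∀ i, HasCompactSupport (f i)) (w : ℝ × ℝ) :
    ∫ ω, ∑ i, ∑ j ∈ univ.erase i, conv (f i) (ξ ω) w * conv (f j) (ξ ω) w
        * ∏ k ∈ (univ.erase i).erase j, conv (G k) (ξ ω) w ∂P
      = ∑ i, ∑ j ∈ univ.erase i,
          convMoment P ξ (Function.update (Function.update G i (f i)) j (f j)) w := by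
  have hint : ∀ i j, Integrable (fun ω => ∏ k,
      conv (Function.update (Function.update G i (f i)) j (f j) k) (ξ ω) w) P := fun i j =>
    integrable_prod_conv hmeas hbd
      (Function.forall_update_of_forall (Function.forall_update_of_forall hG (hf i)) (hf j))
      (Function.forall_update_of_forall (Function.forall_update_of_forall hGs (hfs i)) (hfs j)) w
  have hsum : ∑ i, ∑ j ∈ univ.erase i,
      convMoment P ξ (Function.update (Function.update G i (f i)) j (f j)) w
      = ∫ ω, ∑ i, ∑ j ∈ univ.erase i,
          ∏ k, conv (Function.update (Function.update G i (f i)) j (f j) k) (ξ ω) w ∂P := by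
    rw [integral_finsetSum _ fun i _ => integrable_finsetSum _ fun j _ => hint i j]
    exact Finset.sum_congr rfl fun i _ => (integral_finsetSum _ fun j _ => hint i j).symm
  rw [hsum]
  congr 1 with ω
  refine Finset.sum_congr rfl fun i _ => Finset.sum_congr rfl fun j hj => ?_
  have hij : i ∈ univ.erase j := mem_erase.2 ⟨(ne_of_mem_erase hj).symm, mem_univ i⟩
  rw [Finset.prod_apply_update (mem_univ j) (fun k G => conv G (ξ ω) w),
    Finset.prod_apply_update hij (fun k G => conv G (ξ ω) w), erase_right_comm]
  ring

theorem convMoment_update_px_px_eq_neg_sum (hmeas : Measurable (Function.uncurry ξ))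
    (hbd : ∀ ω z, |ξ ω z| ≤ M)
    (hstat : ∀ (h : ℝ × ℝ) (z : ι → ℝ × ℝ),
      (∫ ω, ∏ i, ξ ω (z i + h) ∂P) = ∫ ω, ∏ i, ξ ω (z i) ∂P)
    {K : ι → ℝ × ℝ → ℝ} (hK : ∀ i, ContDiff ℝ 2 (K i)) (hKs : ∀ i, HasCompactSupport (K i))
    (i : ι) (w : ℝ × ℝ) :
    convMoment P ξ (Function.update K i (px (px (K i)))) w
      = -∑ j ∈ univ.erase i,
          convMoment P ξ (Function.update (Function.update K i (px (K i))) j (px (K j))) w := by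
  have h := sum_convMoment_update_fderiv_eq_zero hmeas hbd hstat
    (Function.forall_update_of_forall (a := i) (fun k => (hK k).of_le one_le_two)
      (contDiff_px (n := 1) (hK i)))
    (Function.forall_update_of_forall (a := i) hKs (hKs i).px) (0, 1) w
  rw [← Finset.add_sum_erase _ _ (mem_univ i), Function.update_self, Function.update_idem,
    Finset.sum_congr rfl fun j hj => by rw [Function.update_of_ne (ne_of_mem_erase hj)]] at h
  exact eq_neg_of_add_eq_zero_left h

theorem sum_convMoment_update_Lop (hmeas : Measurable (Function.uncurry ξ))
    (hbd : ∀ ω z, |ξ ω z| ≤ M)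
    (hstat : ∀ (h : ℝ × ℝ) (z : ι → ℝ × ℝ),
      (∫ ω, ∏ i, ξ ω (z i + h) ∂P) = ∫ ω, ∏ i, ξ ω (z i) ∂P)
    {K : ι → ℝ × ℝ → ℝ} (hK : ∀ i, ContDiff ℝ 2 (K i)) (hKs : ∀ i, HasCompactSupport (K i))
    (c : ℝ) (w : ℝ × ℝ) :
    ∑ i, convMoment P ξ (Function.update K i (Lop c (K i))) w
      = c * ∑ i, ∑ j ∈ univ.erase i,
          convMoment P ξ (Function.update (Function.update K i (px (K i))) j (px (K j))) w := by
  have hK1 : ∀ i, ContDiff ℝ 1 (K i) := fun i => (hK i).of_le one_le_two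
  have hlin : ∀ i, convMoment P ξ (Function.update K i (Lop c (K i))) w
      = convMoment P ξ (Function.update K i (pt (K i))) w
        - c * convMoment P ξ (Function.update K i (px (px (K i)))) w := fun i =>
    convMoment_update_sub_const_mul hmeas hbd (fun k => (hK k).continuous) hKs
      (continuous_pt (hK1 i)) (hKs i).pt (continuous_px (contDiff_px (n := 1) (hK i)))
      (hKs i).px.px i c w
  have htime : ∑ i, convMoment P ξ (Function.update K i (pt (K i))) w = 0 :=
    sum_convMoment_update_fderiv_eq_zero hmeas hbd hstat hK1 hKs (1, 0) w
  simp only [hlin, Finset.sum_sub_distrib, ← Finset.mul_sum, htime,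
    convMoment_update_px_px_eq_neg_sum hmeas hbd hstat hK hKs, Finset.sum_neg_distrib]
  ring

end RandomField

theorem stmt8_general (n : ℕ) (c : ℝ)
    {Ω : Type*} [MeasurableSpace Ω] (P : Measure Ω) [IsProbabilityMeasure P]
    (ξ : Ω → ℝ × ℝ → ℝ) (hmeas : Measurable (Function.uncurry ξ))
    (M : ℝ) (hbd : ∀ ω z, |ξ ω z| ≤ M)
    (hstat : ∀ (h : ℝ × ℝ) (z : Fin n → ℝ × ℝ),
      (∫ ω, ∏ i, ξ ω (z i + h) ∂P) = ∫ ω, ∏ i, ξ ω (z i) ∂P)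
    (K : Fin n → ℝ × ℝ → ℝ)
    (hK : ∀ i, ContDiff ℝ 2 (K i)) (hKsupp : ∀ i, HasCompactSupport (K i)) :
    ∀ w : ℝ × ℝ,
      (∫ ω, ∑ i, conv (Lop c (K i)) (ξ ω) w
          * ∏ k ∈ univ.erase i, conv (K k) (ξ ω) w ∂P)
      = c * ∫ ω, ∑ i, ∑ j ∈ univ.erase i,
          conv (px (K i)) (ξ ω) w * conv (px (K j)) (ξ ω) w
            * ∏ k ∈ (univ.erase i).erase j, conv (K k) (ξ ω) w ∂P := by
  intro w
  have hKc : ∀ i, Continuous (K i) := fun i => (hK i).continuous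
  rw [integral_sum_conv_mul_prod_erase hmeas hbd hKc hKsupp (fun i => continuous_Lop (hK i) c)
      (fun i => (hKsupp i).Lop c) w,
    integral_sum_sum_conv_mul_conv_mul_prod_erase hmeas hbd hKc hKsupp
      (fun i => continuous_px ((hK i).of_le one_le_two)) (fun i => (hKsupp i).px) w]
  exact sum_convMoment_update_Lop hmeas hbd hstat hK hKsupp c w

theorem stmt8 (n : ℕ) (hn : 1 ≤ n) (c : ℝ)
    {Ω : Type*} [MeasurableSpace Ω] (P : Measure Ω) [IsProbabilityMeasure P]
    (ξ : Ω → ℝ × ℝ → ℝ) (hmeas : Measurable (Function.uncurry ξ))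
    (hcont : ∀ ω, Continuous (ξ ω))
    (M : ℝ) (hbd : ∀ ω z, |ξ ω z| ≤ M)
    (hstat : ∀ (h : ℝ × ℝ) (z : Fin n → ℝ × ℝ),
      (∫ ω, ∏ i, ξ ω (z i + h) ∂P) = ∫ ω, ∏ i, ξ ω (z i) ∂P)
    (K : Fin n → ℝ × ℝ → ℝ)
    (hK : ∀ i, ContDiff ℝ 2 (K i)) (hKsupp : ∀ i, HasCompactSupport (K i)) :
    ∀ w : ℝ × ℝ,
      (∫ ω, ∑ i, conv (Lop c (K i)) (ξ ω) w
          * ∏ k ∈ univ.erase i, conv (K k) (ξ ω) w ∂P)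
      = c * ∫ ω, ∑ i, ∑ j ∈ univ.erase i,
          conv (px (K i)) (ξ ω) w * conv (px (K j)) (ξ ω) w
            * ∏ k ∈ (univ.erase i).erase j, conv (K k) (ξ ω) w ∂P :=
  stmt8_general n c P ξ hmeas M hbd hstat K hK hKsupp
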